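/- arXiv:quant-ph/0512206 — 6 statements merged into one kernel-verified Lean document; each statement's English description precedes it below -/
import Mathlib

section
/- Let 𝓗 be a complex Hilbert space, H a bounded self-adjoint operator on 𝓗, S a unitary operator on 𝓗, ℏ > 0, and u : ℝ → ℂ continuous. Set ρ(z) := exp((2/ℏ)∫_0^z Im u(r) dr) and Δ(t,s) := 1_t(s) − 1_0(s) ∈ {−1,0,1}, where 1_a is the indicator of (−∞,a). For t ∈ ℝ define (V^t χ)(z) := exp((i/ℏ)∫_0^z u(r)dr) · exp((i/ℏ)zH) · S^{Δ(t, z+t)} · exp(−(i/ℏ)(z+t)H) · exp(−(i/ℏ)∫_0^{z+t} u(r)dr) · χ(z+t). Then each V^t is a well-defined surjective linear isometry of the weighted space L²(ℝ, ρ(z)dz; 𝓗) onto itself, V^0 is the identity, and V^r ∘ V^t = V^{r+t} for all r, t ∈ ℝ. -/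
/-!
Put `A(z) = e^{(i/ℏ)∫₀^z u} e^{(i/ℏ)zH} S^{1₀(z)}`. Since `Δ(t, z + t) = 1₀(z) - 1₀(z + t)`,
the formula for `V^t` reads `(V^t χ)(z) = A(z) A(z + t)⁻¹ χ(z + t)`: `V^t` is the translation by
`t` conjugated by multiplication by `A`. The group law is then that of translations, and `V^t`
is isometric because multiplication by `A` maps `L²(dz)` isometrically onto `L²(ρ dz)`: the
operator factors of `A(z)` are unitary and `|e^{(i/ℏ)∫₀^z u}|² = 1/ρ(z)`.
-/

open MeasureTheory Complex
open scoped ENNReal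

namespace MeasureTheory

section gaugeShift

variable {G 𝕜 E : Type*} [AddGroup G] [NontriviallyNormedField 𝕜] [NormedAddCommGroup E]
  [NormedSpace 𝕜 E] {A : G → (E →L[𝕜] E)ˣ}

def gaugeShift (A : G → (E →L[𝕜] E)ˣ) (t : G) : (G → E) →ₗ[𝕜] (G → E) where
  toFun g z := (A z : E →L[𝕜] E) ((↑(A (z + t))⁻¹ : E →L[𝕜] E) (g (z + t)))
  map_add' g h := by ext z; simp
  map_smul' c g := by ext z; simp

theorem gaugeShift_apply (t : G) (g : G → E) (z : G) :
    gaugeShift A t g z = (A z : E →L[𝕜] E) ((↑(A (z + t))⁻¹ : E →L[𝕜] E) (g (z + t))) :=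
  rfl

theorem gaugeShift_zero (g : G → E) : gaugeShift A 0 g = g := by
  ext z
  rw [gaugeShift_apply, add_zero, ← mul_apply_eq_comp, Units.mul_inv, one_apply_eq_self]

theorem gaugeShift_gaugeShift (r t : G) (g : G → E) :
    gaugeShift A r (gaugeShift A t g) = gaugeShift A (r + t) g := by
  ext z
  rw [gaugeShift_apply, gaugeShift_apply,
    ← mul_apply_eq_comp (↑(A (z + r))⁻¹ : E →L[𝕜] E) (A (z + r)), Units.inv_mul,
    one_apply_eq_self, gaugeShift_apply, add_assoc]

end gaugeShift

variable {G 𝕜 E : Type*} [MeasurableSpace G] {ν : Measure G} [NontriviallyNormedField 𝕜]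
  [NormedAddCommGroup E] [NormedSpace 𝕜 E]

/-- Multiplication by `A` maps `Lᵖ(ν)` isometrically onto `Lᵖ(f ν)`, with inverse
multiplication by `A⁻¹`. -/
structure IsLpGauge (ν : Measure G) (f : G → ℝ≥0∞) (p : ℝ≥0∞) (A : G → (E →L[𝕜] E)ˣ) :
    Prop where
  measurable_density : Measurable f
  density_ne_zero : ∀ z, f z ≠ 0
  density_ne_top : ∀ z, f z ≠ ∞
  aestronglyMeasurable : AEStronglyMeasurable (fun z => (A z : E →L[𝕜] E)) ν
  aestronglyMeasurable_inv : AEStronglyMeasurable (fun z => (↑(A z)⁻¹ : E →L[𝕜] E)) ν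
  density_mul_enorm_rpow : ∀ z y, f z * ‖(A z : E →L[𝕜] E) y‖ₑ ^ p.toReal = ‖y‖ₑ ^ p.toReal

theorem IsLpGauge.enorm_inv_apply_rpow {f : G → ℝ≥0∞} {p : ℝ≥0∞} {A : G → (E →L[𝕜] E)ˣ}
    (hA : IsLpGauge ν f p A) (z : G) (y : E) :
    ‖(↑(A z)⁻¹ : E →L[𝕜] E) y‖ₑ ^ p.toReal = f z * ‖y‖ₑ ^ p.toReal := by
  rw [← hA.density_mul_enorm_rpow z, ← mul_apply_eq_comp, Units.mul_inv, one_apply_eq_self]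

variable [AddGroup G] [MeasurableAdd G] [ν.IsAddRightInvariant]

theorem quasiMeasurePreserving_add_right_withDensity {f : G → ℝ≥0∞} (hf : AEMeasurable f ν)
    (hf0 : ∀ᵐ z ∂ν, f z ≠ 0) (t : G) :
    Measure.QuasiMeasurePreserving (· + t) (ν.withDensity f) (ν.withDensity f) :=
  (measurePreserving_add_right ν t).quasiMeasurePreserving.mono
    (withDensity_absolutelyContinuous ν f) (withDensity_absolutelyContinuous' hf hf0)

namespace IsLpGauge

variable {f : G → ℝ≥0∞} {p : ℝ≥0∞} {A : G → (E →L[𝕜] E)ˣ}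

theorem quasiMeasurePreserving_add_right (hA : IsLpGauge ν f p A) (t : G) :
    Measure.QuasiMeasurePreserving (· + t) (ν.withDensity f) (ν.withDensity f) :=
  quasiMeasurePreserving_add_right_withDensity hA.measurable_density.aemeasurable
    (ae_of_all _ hA.density_ne_zero) t

theorem gaugeShift_congr_ae (hA : IsLpGauge ν f p A) (t : G) {g g' : G → E}
    (h : g =ᵐ[ν.withDensity f] g') :
    gaugeShift A t g =ᵐ[ν.withDensity f] gaugeShift A t g' := by
  filter_upwards [(hA.quasiMeasurePreserving_add_right t).ae_eq_comp h] with z hz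
  simp only [gaugeShift_apply, Function.comp_apply] at hz ⊢
  rw [hz]

theorem aestronglyMeasurable_gaugeShift (hA : IsLpGauge ν f p A) (t : G) {g : G → E}
    (hg : AEStronglyMeasurable g (ν.withDensity f)) :
    AEStronglyMeasurable (gaugeShift A t g) (ν.withDensity f) := by
  have hac := withDensity_absolutelyContinuous ν f
  have hshift := hA.quasiMeasurePreserving_add_right t
  have happly := (ContinuousLinearMap.id 𝕜 (E →L[𝕜] E)).aestronglyMeasurable_comp₂
    ((hA.aestronglyMeasurable_inv.mono_ac hac).comp_quasiMeasurePreserving hshift)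
    (hg.comp_quasiMeasurePreserving hshift)
  exact (ContinuousLinearMap.id 𝕜 (E →L[𝕜] E)).aestronglyMeasurable_comp₂
    (hA.aestronglyMeasurable.mono_ac hac) happly

theorem eLpNorm_gaugeShift (hA : IsLpGauge ν f p A) (hp0 : p ≠ 0) (hp : p ≠ ∞) (t : G)
    (g : G → E) :
    eLpNorm (gaugeShift A t g) p (ν.withDensity f) = eLpNorm g p (ν.withDensity f) := by
  have hf_lt_top : ∀ᵐ z ∂ν, f z < ∞ := ae_of_all _ fun z => (hA.density_ne_top z).lt_top
  simp only [eLpNorm_eq_lintegral_rpow_enorm_toReal hp0 hp,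
    lintegral_withDensity_eq_lintegral_mul_non_measurable ν hA.measurable_density hf_lt_top,
    Pi.mul_apply, gaugeShift_apply, hA.density_mul_enorm_rpow, hA.enorm_inv_apply_rpow]
  rw [lintegral_add_right_eq_self (fun z => f z * ‖g z‖ₑ ^ p.toReal) t]

theorem memLp_gaugeShift (hA : IsLpGauge ν f p A) (hp0 : p ≠ 0) (hp : p ≠ ∞) (t : G)
    {g : G → E} (hg : MemLp g p (ν.withDensity f)) :
    MemLp (gaugeShift A t g) p (ν.withDensity f) :=
  ⟨hA.aestronglyMeasurable_gaugeShift t hg.1, by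
    rw [hA.eLpNorm_gaugeShift hp0 hp]; exact hg.2⟩

variable [Fact (1 ≤ p)]

noncomputable def gaugeShiftLp (hA : IsLpGauge ν f p A) (hp : p ≠ ∞) (t : G)
    (χ : Lp E p (ν.withDensity f)) : Lp E p (ν.withDensity f) :=
  (hA.memLp_gaugeShift (zero_lt_one.trans_le Fact.out).ne' hp t (Lp.memLp χ)).toLp _

variable (hA : IsLpGauge ν f p A) (hp : p ≠ ∞)

theorem coeFn_gaugeShiftLp (t : G) (χ : Lp E p (ν.withDensity f)) :
    hA.gaugeShiftLp hp t χ =ᵐ[ν.withDensity f] gaugeShift A t χ :=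
  MemLp.coeFn_toLp _

theorem gaugeShiftLp_zero (χ : Lp E p (ν.withDensity f)) : hA.gaugeShiftLp hp 0 χ = χ := by
  simp only [gaugeShiftLp, gaugeShift_zero, Lp.toLp_coeFn]

theorem gaugeShiftLp_gaugeShiftLp (r t : G) (χ : Lp E p (ν.withDensity f)) :
    hA.gaugeShiftLp hp r (hA.gaugeShiftLp hp t χ) = hA.gaugeShiftLp hp (r + t) χ := by
  apply Lp.ext
  filter_upwards [hA.coeFn_gaugeShiftLp hp r _, hA.coeFn_gaugeShiftLp hp (r + t) χ,
    hA.gaugeShift_congr_ae r (hA.coeFn_gaugeShiftLp hp t χ)] with z h₁ h₂ h₃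
  rw [h₁, h₂, h₃, gaugeShift_gaugeShift]

theorem gaugeShiftLp_add (t : G) (χ ψ : Lp E p (ν.withDensity f)) :
    hA.gaugeShiftLp hp t (χ + ψ) = hA.gaugeShiftLp hp t χ + hA.gaugeShiftLp hp t ψ := by
  apply Lp.ext
  filter_upwards [hA.coeFn_gaugeShiftLp hp t (χ + ψ), hA.coeFn_gaugeShiftLp hp t χ,
    hA.coeFn_gaugeShiftLp hp t ψ, Lp.coeFn_add (hA.gaugeShiftLp hp t χ) (hA.gaugeShiftLp hp t ψ),
    hA.gaugeShift_congr_ae t (Lp.coeFn_add χ ψ)] with z h₁ h₂ h₃ h₄ h₅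
  rw [h₁, h₄, Pi.add_apply, h₂, h₃, h₅, map_add, Pi.add_apply]

theorem gaugeShiftLp_smul (t : G) (c : 𝕜) (χ : Lp E p (ν.withDensity f)) :
    hA.gaugeShiftLp hp t (c • χ) = c • hA.gaugeShiftLp hp t χ := by
  apply Lp.ext
  filter_upwards [hA.coeFn_gaugeShiftLp hp t (c • χ), hA.coeFn_gaugeShiftLp hp t χ,
    Lp.coeFn_smul c (hA.gaugeShiftLp hp t χ),
    hA.gaugeShift_congr_ae t (Lp.coeFn_smul c χ)] with z h₁ h₂ h₃ h₄
  rw [h₁, h₃, Pi.smul_apply, h₂, h₄, map_smul, Pi.smul_apply]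

theorem norm_gaugeShiftLp (t : G) (χ : Lp E p (ν.withDensity f)) :
    ‖hA.gaugeShiftLp hp t χ‖ = ‖χ‖ := by
  rw [gaugeShiftLp, Lp.norm_toLp, hA.eLpNorm_gaugeShift (zero_lt_one.trans_le Fact.out).ne' hp,
    Lp.norm_def]

noncomputable def gaugeShiftLpEquiv (t : G) :
    Lp E p (ν.withDensity f) ≃ₗᵢ[𝕜] Lp E p (ν.withDensity f) where
  toFun := hA.gaugeShiftLp hp t
  map_add' := hA.gaugeShiftLp_add hp t
  map_smul' := hA.gaugeShiftLp_smul hp t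
  invFun := hA.gaugeShiftLp hp (-t)
  left_inv χ := by
    rw [gaugeShiftLp_gaugeShiftLp, neg_add_cancel, gaugeShiftLp_zero]
  right_inv χ := by
    rw [gaugeShiftLp_gaugeShiftLp, add_neg_cancel, gaugeShiftLp_zero]
  norm_map' := hA.norm_gaugeShiftLp hp t

end IsLpGauge

end MeasureTheory

theorem ite_mul_ite_inv_eq_zpow {M : Type*} [Group M] (S : M) (a b : Prop) [Decidable a]
    [Decidable b] :
    (if a then S else 1) * (if b then S else 1)⁻¹
      = S ^ ((if a then 1 else 0) - (if b then 1 else 0) : ℤ) := by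
  split_ifs <;> simp

theorem aestronglyMeasurable_apply_ite_lt {α X : Type*} [TopologicalSpace X] {μ : Measure ℝ}
    (F : α → X) (c : ℝ) (a b : α) :
    AEStronglyMeasurable (fun z : ℝ => F (if z < c then a else b)) μ := by
  simp only [apply_ite F]
  exact (stronglyMeasurable_const.ite measurableSet_Iio
    stronglyMeasurable_const).aestronglyMeasurable

namespace ToyModel

noncomputable def phase (ℏ : ℝ) (u : ℝ → ℂ) (z : ℝ) : ℂ :=
  Complex.exp ((I / ℏ) * ∫ r in (0:ℝ)..z, u r)

noncomputable def weight (ℏ : ℝ) (u : ℝ → ℂ) (z : ℝ) : ℝ :=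
  Real.exp ((2 / ℏ) * ∫ r in (0:ℝ)..z, (u r).im)

variable {ℏ : ℝ} {u : ℝ → ℂ}

theorem weight_pos {z : ℝ} : 0 < weight ℏ u z := Real.exp_pos _

theorem continuous_phase (hu : Continuous u) : Continuous (phase ℏ u) :=
  Complex.continuous_exp.comp (continuous_const.mul
    (intervalIntegral.continuous_primitive (fun a b => hu.intervalIntegrable a b) 0))

theorem continuous_weight (hu : Continuous u) : Continuous (weight ℏ u) :=
  Real.continuous_exp.comp (continuous_const.mul
    (intervalIntegral.continuous_primitive
      (fun a b => (Complex.continuous_im.comp hu).intervalIntegrable a b) 0))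

theorem weight_mul_norm_phase_sq (hu : Continuous u) (z : ℝ) :
    weight ℏ u z * ‖phase ℏ u z‖ ^ 2 = 1 := by
  have him : (∫ r in (0:ℝ)..z, u r).im = ∫ r in (0:ℝ)..z, (u r).im := by
    simpa using (Complex.imCLM.intervalIntegral_comp_comm (hu.intervalIntegrable 0 z)).symm
  have hre : ((I / ℏ) * ∫ r in (0:ℝ)..z, u r).re = -(1 / ℏ) * ∫ r in (0:ℝ)..z, (u r).im := by
    rw [← him, div_mul_eq_mul_div, Complex.div_ofReal_re]
    simp only [Complex.mul_re, Complex.I_re, Complex.I_im]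
    ring
  rw [weight, phase, Complex.norm_exp, hre, ← Real.exp_nat_mul, ← Real.exp_add]
  convert Real.exp_zero using 2
  push_cast
  ring

variable {𝓗 : Type*} [NormedAddCommGroup 𝓗] [InnerProductSpace ℂ 𝓗] [CompleteSpace 𝓗]
  (H : 𝓗 →L[ℂ] 𝓗) (hH : IsSelfAdjoint H) (S : unitary (𝓗 →L[ℂ] 𝓗))

noncomputable def evolution (ℏ z : ℝ) : unitary (𝓗 →L[ℂ] 𝓗) :=
  selfAdjoint.expUnitary ⟨((z / ℏ : ℝ) : ℂ) • H, IsSelfAdjoint.smul (Complex.conj_ofReal _) hH⟩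

theorem coe_evolution (z : ℝ) :
    (evolution H hH ℏ z : 𝓗 →L[ℂ] 𝓗) = NormedSpace.exp (((I / ℏ) * z) • H) := by
  rw [evolution, selfAdjoint.expUnitary_coe, smul_smul]
  congr 2
  push_cast
  ring

theorem evolution_add (a b : ℝ) :
    evolution H hH ℏ (a + b) = evolution H hH ℏ a * evolution H hH ℏ b := by
  rw [evolution, evolution, evolution,
    ← Commute.expUnitary_add ((Commute.refl H).smul_left _ |>.smul_right _)]
  congr 1
  ext1
  simp [add_div, add_smul]

theorem evolution_neg (z : ℝ) : evolution H hH ℏ (-z) = (evolution H hH ℏ z)⁻¹ := by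
  rw [eq_inv_iff_mul_eq_one, ← evolution_add, neg_add_cancel, evolution]
  ext1
  simp

theorem continuous_evolution : Continuous fun z => (evolution H hH ℏ z : 𝓗 →L[ℂ] 𝓗) :=
  continuous_subtype_val.comp (selfAdjoint.continuous_expUnitary.comp (by fun_prop))

noncomputable def gauge (ℏ : ℝ) (u : ℝ → ℂ) (z : ℝ) : (𝓗 →L[ℂ] 𝓗)ˣ :=
  Units.mk0 (phase ℏ u z) (Complex.exp_ne_zero _) •
    Unitary.toUnits (evolution H hH ℏ z * if z < 0 then S else 1)

theorem coe_gauge (z : ℝ) :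
    (gauge H hH S ℏ u z : 𝓗 →L[ℂ] 𝓗)
      = phase ℏ u z • ((evolution H hH ℏ z : 𝓗 →L[ℂ] 𝓗) * ↑(if z < 0 then S else 1)) := by
  rfl

theorem coe_gauge_inv (z : ℝ) :
    (↑(gauge H hH S ℏ u z)⁻¹ : 𝓗 →L[ℂ] 𝓗)
      = (phase ℏ u z)⁻¹ • ((↑(if z < 0 then S else 1)⁻¹ : 𝓗 →L[ℂ] 𝓗) *
          ↑(evolution H hH ℏ (-z))) := by
  simp only [gauge, map_mul, Units.smul_inv, mul_inv_rev, Units.val_smul, Units.val_mul,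
    Unitary.val_inv_toUnits_apply, Units.smul_def, Units.val_inv_eq_inv_val, evolution_neg]
  rfl

theorem gaugeShift_gauge_apply (t z : ℝ) (g : ℝ → 𝓗) :
    gaugeShift (gauge H hH S ℏ u) t g z
      = phase ℏ u z • (evolution H hH ℏ z : 𝓗 →L[ℂ] 𝓗)
          ((↑(S ^ ((if z + t < t then 1 else 0) - (if z + t < 0 then 1 else 0) : ℤ)) :
              𝓗 →L[ℂ] 𝓗)
            ((evolution H hH ℏ (-(z + t)) : 𝓗 →L[ℂ] 𝓗)
              ((phase ℏ u (z + t))⁻¹ • g (z + t)))) := by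
  simp only [add_lt_iff_neg_right]
  rw [← ite_mul_ite_inv_eq_zpow, gaugeShift_apply, coe_gauge, coe_gauge_inv, evolution_neg]
  simp only [smul_apply, map_smul, mul_apply_eq_comp, Submonoid.coe_mul]
  exact smul_comm _ _ _

theorem norm_gauge_apply (z : ℝ) (y : 𝓗) :
    ‖(gauge H hH S ℏ u z : 𝓗 →L[ℂ] 𝓗) y‖ = ‖phase ℏ u z‖ * ‖y‖ := by
  rw [coe_gauge, smul_apply, norm_smul, mul_apply_eq_comp, Unitary.norm_map, Unitary.norm_map]

theorem isLpGauge (hu : Continuous u) :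
    IsLpGauge volume (fun z => ENNReal.ofReal (weight ℏ u z)) 2 (gauge H hH S ℏ u) where
  measurable_density := ENNReal.measurable_ofReal.comp (continuous_weight hu).measurable
  density_ne_zero z := (ENNReal.ofReal_pos.2 weight_pos).ne'
  density_ne_top z := ENNReal.ofReal_ne_top
  aestronglyMeasurable := by
    simp only [coe_gauge]
    exact (continuous_phase hu).aestronglyMeasurable.smul
      ((continuous_evolution H hH).aestronglyMeasurable.mul
        (aestronglyMeasurable_apply_ite_lt (fun V : unitary _ => (V : 𝓗 →L[ℂ] 𝓗)) 0 S 1))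
  aestronglyMeasurable_inv := by
    simp only [coe_gauge_inv]
    exact ((continuous_phase hu).inv₀ fun z => Complex.exp_ne_zero _).aestronglyMeasurable.smul
      ((aestronglyMeasurable_apply_ite_lt (fun V : unitary _ => (↑V⁻¹ : 𝓗 →L[ℂ] 𝓗)) 0 S 1).mul
        ((continuous_evolution H hH).comp continuous_neg).aestronglyMeasurable)
  density_mul_enorm_rpow z y := by
    rw [ENNReal.toReal_ofNat, ENNReal.rpow_two, ENNReal.rpow_two, ← ofReal_norm, ← ofReal_norm,
      norm_gauge_apply H hH S, ← ENNReal.ofReal_pow (by positivity),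
      ← ENNReal.ofReal_pow (by positivity), ← ENNReal.ofReal_mul weight_pos.le, mul_pow,
      ← mul_assoc, weight_mul_norm_phase_sq hu, one_mul]

end ToyModel

theorem toy_model_unitary_group_general {𝓗 : Type*} [NormedAddCommGroup 𝓗]
    [InnerProductSpace ℂ 𝓗] [CompleteSpace 𝓗]
    (H : 𝓗 →L[ℂ] 𝓗) (hH : IsSelfAdjoint H)
    (S : unitary (𝓗 →L[ℂ] 𝓗))
    (ℏ : ℝ)
    (u : ℝ → ℂ) (hu : Continuous u)
    (ρ : ℝ → ℝ) (hρ : ∀ z, ρ z = Real.exp ((2 / ℏ) * ∫ r in (0:ℝ)..z, (u r).im))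
    (μ : Measure ℝ)
    (hμ : μ = volume.withDensity fun z => ENNReal.ofReal (ρ z))
    (Δ : ℝ → ℝ → ℤ)
    (hΔ : ∀ t s, Δ t s = (if s < t then 1 else 0) - (if s < 0 then 1 else 0)) :
    ∃ V : ℝ → (Lp 𝓗 2 μ ≃ₗᵢ[ℂ] Lp 𝓗 2 μ),
      (∀ t : ℝ, ∀ χ : Lp 𝓗 2 μ, ∀ᵐ z ∂μ,
        (V t χ : ℝ → 𝓗) z
          = Complex.exp ((Complex.I / (ℏ : ℂ)) * ∫ r in (0:ℝ)..z, u r) •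
            (NormedSpace.exp (((Complex.I / (ℏ : ℂ)) * (z : ℂ)) • H))
              ((↑(S ^ (Δ t (z + t))) : 𝓗 →L[ℂ] 𝓗)
                ((NormedSpace.exp ((-((Complex.I / (ℏ : ℂ)) * ((z : ℂ) + (t : ℂ)))) • H))
                  (Complex.exp (-((Complex.I / (ℏ : ℂ)) * ∫ r in (0:ℝ)..(z + t), u r)) •
                    (χ : ℝ → 𝓗) (z + t)))))
      ∧ V 0 = LinearIsometryEquiv.refl ℂ (Lp 𝓗 2 μ)
      ∧ ∀ r t : ℝ, ∀ χ : Lp 𝓗 2 μ, V r (V t χ) = V (r + t) χ := by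
  obtain rfl : ρ = ToyModel.weight ℏ u := funext hρ
  subst hμ
  have hA := ToyModel.isLpGauge (ℏ := ℏ) H hH S hu
  have hp : (2 : ℝ≥0∞) ≠ ∞ := ENNReal.ofNat_ne_top
  refine ⟨hA.gaugeShiftLpEquiv hp, fun t χ => ?_,
    LinearIsometryEquiv.ext (hA.gaugeShiftLp_zero hp), hA.gaugeShiftLp_gaugeShiftLp hp⟩
  filter_upwards [hA.coeFn_gaugeShiftLp hp t χ] with z hz
  refine hz.trans ?_
  rw [ToyModel.gaugeShift_gauge_apply, hΔ, ToyModel.coe_evolution, ToyModel.coe_evolution,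
    ToyModel.phase, ToyModel.phase, ← Complex.exp_neg]
  push_cast [mul_neg]
  rfl

/-- The resolving family `V^t` of the toy Schrödinger boundary value problem
`iℏ∂_tχ = (u + iℏ∂_z + H)χ`, `χ(0_−) = Sχ(0)`, given explicitly by
`(V^t χ)(z) = e^{(i/ℏ)∫_0^z u} e^{(i/ℏ)zH} S^{Δ(t,z+t)} e^{−(i/ℏ)(z+t)H}
e^{−(i/ℏ)∫_0^{z+t} u} χ(z+t)`, is a one-parameter group of surjective linear
isometries of the weighted space `L²(ℝ, ρ(z)dz; 𝓗)` with `V^0 = I`. -/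
theorem toy_model_unitary_group {𝓗 : Type*} [NormedAddCommGroup 𝓗]
    [InnerProductSpace ℂ 𝓗] [CompleteSpace 𝓗]
    (H : 𝓗 →L[ℂ] 𝓗) (hH : IsSelfAdjoint H)
    (S : unitary (𝓗 →L[ℂ] 𝓗))
    (ℏ : ℝ) (hℏ : 0 < ℏ)
    (u : ℝ → ℂ) (hu : Continuous u)
    (ρ : ℝ → ℝ) (hρ : ∀ z, ρ z = Real.exp ((2 / ℏ) * ∫ r in (0:ℝ)..z, (u r).im))
    (μ : Measure ℝ)
    (hμ : μ = volume.withDensity fun z => ENNReal.ofReal (ρ z))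
    (Δ : ℝ → ℝ → ℤ)
    (hΔ : ∀ t s, Δ t s = (if s < t then 1 else 0) - (if s < 0 then 1 else 0)) :
    ∃ V : ℝ → (Lp 𝓗 2 μ ≃ₗᵢ[ℂ] Lp 𝓗 2 μ),
      (∀ t : ℝ, ∀ χ : Lp 𝓗 2 μ, ∀ᵐ z ∂μ,
        (V t χ : ℝ → 𝓗) z
          = Complex.exp ((Complex.I / (ℏ : ℂ)) * ∫ r in (0:ℝ)..z, u r) •
            (NormedSpace.exp (((Complex.I / (ℏ : ℂ)) * (z : ℂ)) • H))
              ((↑(S ^ (Δ t (z + t))) : 𝓗 →L[ℂ] 𝓗)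
                ((NormedSpace.exp ((-((Complex.I / (ℏ : ℂ)) * ((z : ℂ) + (t : ℂ)))) • H))
                  (Complex.exp (-((Complex.I / (ℏ : ℂ)) * ∫ r in (0:ℝ)..(z + t), u r)) •
                    (χ : ℝ → 𝓗) (z + t)))))
      ∧ V 0 = LinearIsometryEquiv.refl ℂ (Lp 𝓗 2 μ)
      ∧ ∀ r t : ℝ, ∀ χ : Lp 𝓗 2 μ, V r (V t χ) = V (r + t) χ :=
  toy_model_unitary_group_general H hH S ℏ u hu ρ hρ μ hμ Δ hΔ
end

section
/- Let 𝓗 be a complex Hilbert space, H a bounded self-adjoint operator on 𝓗, ℏ > 0, u : ℝ → ℂ continuous, and ρ(z) := exp((2/ℏ)∫_0^z Im u(r) dr). The dressing map W defined by (Wη)(z) := exp((i/ℏ)∫_0^z u(r)dr) · exp((i/ℏ)zH) · η(z) is a surjective linear isometry from L²(ℝ; 𝓗) (with Lebesgue measure) onto the weighted space L²(ℝ, ρ(z)dz; 𝓗). -/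
/-!
Write `c z = exp ((i/ℏ) ∫_0^z u)` and `U z = exp ((i/ℏ) z H)`, which is unitary because `H` is
self-adjoint, so that `(W η) z = c z • U z (η z)`. From `|c z|² ρ z = 1` one gets
`ρ z ‖(W η) z‖² = ‖η z‖²` pointwise, hence `W` is an isometry `L²(dz) → L²(ρ dz)`; it is onto
because the pointwise inverse `(c z)⁻¹ • (U z)⋆` maps `L²(ρ dz)` back into `L²(dz)`.
-/

open MeasureTheory
open scoped ENNReal

namespace MeasureTheory

variable {α 𝕜 E F : Type*} [MeasurableSpace α] {ν : Measure α}
  [NontriviallyNormedField 𝕜] [NormedAddCommGroup E] [NormedSpace 𝕜 E]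
  [NormedAddCommGroup F] [NormedSpace 𝕜 F] {p : ℝ≥0∞} {w : α → ℝ≥0∞}

theorem eLpNorm_withDensity_eq_of_mul_enorm_rpow {f : α → E} {g : α → F} (hp0 : p ≠ 0)
    (hp : p ≠ ∞) (hw : AEMeasurable w ν) (hg : AEStronglyMeasurable g ν)
    (hfg : ∀ᵐ z ∂ν, w z * ‖g z‖ₑ ^ p.toReal = ‖f z‖ₑ ^ p.toReal) :
    eLpNorm g p (ν.withDensity w) = eLpNorm f p ν := by
  simp only [eLpNorm_eq_lintegral_rpow_enorm_toReal hp0 hp]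
  rw [lintegral_withDensity_eq_lintegral_mul₀ hw (hg.enorm.pow_const _)]
  exact congrArg (· ^ (1 / p.toReal)) (lintegral_congr_ae hfg)

theorem AEStronglyMeasurable.clm_apply {T : α → E →L[𝕜] F} {f : α → E}
    (hT : AEStronglyMeasurable T ν) (hf : AEStronglyMeasurable f ν) :
    AEStronglyMeasurable (fun z => T z (f z)) ν :=
  (ContinuousLinearMap.apply 𝕜 F).aestronglyMeasurable_comp₂ hf hT

theorem exists_linearIsometryEquiv_withDensity [Fact (1 ≤ p)] (hp : p ≠ ∞)
    (hw : AEMeasurable w ν) (hw0 : ∀ᵐ z ∂ν, w z ≠ 0)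
    {T : α → E →L[𝕜] F} {S : α → F →L[𝕜] E}
    (hT : AEStronglyMeasurable T ν) (hS : AEStronglyMeasurable S ν)
    (hTS : ∀ z, Function.RightInverse (S z) (T z))
    (hTw : ∀ z x, w z * ‖T z x‖ₑ ^ p.toReal = ‖x‖ₑ ^ p.toReal) :
    ∃ W : Lp E p ν ≃ₗᵢ[𝕜] Lp F p (ν.withDensity w),
      ∀ η, W η =ᵐ[ν] fun z => T z (η z) := by
  have hp0 : p ≠ 0 := (zero_lt_one.trans_le Fact.out).ne'
  have hac : ν.withDensity w ≪ ν := withDensity_absolutelyContinuous _ _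
  have hac' : ν ≪ ν.withDensity w := withDensity_absolutelyContinuous' hw hw0
  have eLpNorm_T {f : α → E} (hf : AEStronglyMeasurable f ν) :
      eLpNorm (fun z => T z (f z)) p (ν.withDensity w) = eLpNorm f p ν :=
    eLpNorm_withDensity_eq_of_mul_enorm_rpow hp0 hp hw (hT.clm_apply hf)
      (.of_forall fun z => hTw z (f z))
  have memLp_T (η : Lp E p ν) : MemLp (fun z => T z (η z)) p (ν.withDensity w) :=
    ⟨(hT.clm_apply (Lp.aestronglyMeasurable η)).mono_ac hac, by
      rw [eLpNorm_T (Lp.aestronglyMeasurable η)]; exact (Lp.memLp η).2⟩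
  let W : Lp E p ν →ₗᵢ[𝕜] Lp F p (ν.withDensity w) :=
    { toFun η := (memLp_T η).toLp
      map_add' η η' := by
        rw [← MemLp.toLp_add]
        refine MemLp.toLp_congr _ _ ?_
        filter_upwards [hac.ae_le (Lp.coeFn_add η η')] with z hz
        rw [hz, Pi.add_apply, map_add]; rfl
      map_smul' a η := by
        rw [← MemLp.toLp_const_smul]
        refine MemLp.toLp_congr _ _ ?_
        filter_upwards [hac.ae_le (Lp.coeFn_smul a η)] with z hz
        rw [hz, Pi.smul_apply, map_smul]; rfl
      norm_map' η := by
        change ‖(memLp_T η).toLp‖ = ‖η‖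
        rw [Lp.norm_toLp, eLpNorm_T (Lp.aestronglyMeasurable η), Lp.norm_def] }
  have hW (η : Lp E p ν) : W η =ᵐ[ν] fun z => T z (η z) := hac'.ae_le (memLp_T η).coeFn_toLp
  have hW_surj : Function.Surjective W := by
    intro ξ
    have hSξ : AEStronglyMeasurable (fun z => S z (ξ z)) ν :=
      hS.clm_apply ((Lp.aestronglyMeasurable ξ).mono_ac hac')
    have hmem : MemLp (fun z => S z (ξ z)) p ν := by
      refine ⟨hSξ, ?_⟩
      rw [← eLpNorm_T hSξ]
      simpa only [hTS _ _] using (Lp.memLp ξ).2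
    refine ⟨hmem.toLp, Lp.ext ?_⟩
    filter_upwards [hac.ae_le (hW (hmem.toLp _)), hac.ae_le hmem.coeFn_toLp] with z hWz hz
    rw [hWz, hz, hTS]
  exact ⟨.ofSurjective W hW_surj, hW⟩

theorem exists_linearIsometryEquiv_withDensity_smul_unitary {𝕜 E : Type*} [RCLike 𝕜]
    [NormedAddCommGroup E] [InnerProductSpace 𝕜 E] [CompleteSpace E] [Fact (1 ≤ p)]
    (hp : p ≠ ∞) (hw : AEMeasurable w ν) {c : α → 𝕜} {U : α → unitary (E →L[𝕜] E)}
    (hc : AEStronglyMeasurable c ν) (hU : AEStronglyMeasurable (fun z => (U z : E →L[𝕜] E)) ν)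
    (hcw : ∀ z, w z * ‖c z‖ₑ ^ p.toReal = 1) :
    ∃ W : Lp E p ν ≃ₗᵢ[𝕜] Lp E p (ν.withDensity w),
      ∀ η, W η =ᵐ[ν] fun z => c z • (U z : E →L[𝕜] E) (η z) := by
  have hp0 : 0 < p.toReal := ENNReal.toReal_pos (zero_lt_one.trans_le Fact.out).ne' hp
  have hc0 (z : α) : c z ≠ 0 := by
    rintro h
    simpa [h, hp0] using hcw z
  have hw0 (z : α) : w z ≠ 0 := by
    rintro h
    simpa [h] using hcw z
  refine exists_linearIsometryEquiv_withDensity (T := fun z => c z • (U z : E →L[𝕜] E))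
    (S := fun z => (c z)⁻¹ • star (U z : E →L[𝕜] E)) hp hw (.of_forall hw0)
    (hc.smul hU) (hc.inv₀.smul hU.star) (fun z y => ?_) (fun z x => ?_)
  · simp [smul_smul, hc0 z, ← mul_apply_eq_comp]
  · rw [_root_.smul_apply, enorm_smul, ENNReal.mul_rpow_of_nonneg _ _ hp0.le,
      ← mul_assoc, hcw z, one_mul, ← ofReal_norm, Unitary.norm_map, ofReal_norm]

end MeasureTheory

theorem Complex.norm_exp_I_div_mul_sq (ℏ : ℝ) (w : ℂ) :
    ‖Complex.exp ((Complex.I / ℏ) * w)‖ ^ 2 = Real.exp (-(2 / ℏ * w.im)) := by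
  rw [Complex.norm_exp, ← Real.exp_nat_mul]
  congr 1
  simp [Complex.div_re, Complex.div_im]
  ring

theorem dressing_map_isometry_general {𝓗 : Type*} [NormedAddCommGroup 𝓗]
    [InnerProductSpace ℂ 𝓗] [CompleteSpace 𝓗]
    (H : 𝓗 →L[ℂ] 𝓗) (hH : IsSelfAdjoint H)
    (ℏ : ℝ)
    (u : ℝ → ℂ) (hu : Continuous u)
    (ρ : ℝ → ℝ) (hρ : ∀ z, ρ z = Real.exp ((2 / ℏ) * ∫ r in (0:ℝ)..z, (u r).im))
    (μ : Measure ℝ)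
    (hμ : μ = volume.withDensity fun z => ENNReal.ofReal (ρ z)) :
    ∃ W : Lp 𝓗 2 (volume : Measure ℝ) ≃ₗᵢ[ℂ] Lp 𝓗 2 μ,
      ∀ η : Lp 𝓗 2 (volume : Measure ℝ), ∀ᵐ z : ℝ,
        (W η : ℝ → 𝓗) z
          = Complex.exp ((Complex.I / (ℏ : ℂ)) * ∫ r in (0:ℝ)..z, u r) •
            (NormedSpace.exp (((Complex.I / (ℏ : ℂ)) * (z : ℂ)) • H))
              ((η : ℝ → 𝓗) z) := by
  subst hμ
  have him (z : ℝ) : ∫ r in (0:ℝ)..z, (u r).im = (∫ r in (0:ℝ)..z, u r).im :=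
    intervalIntegral.intervalIntegral_im (hu.intervalIntegrable 0 z)
  obtain rfl : ρ = fun z => Real.exp (2 / ℏ * (∫ r in (0:ℝ)..z, u r).im) :=
    funext fun z => by rw [hρ, him]
  have hprim : Continuous fun z : ℝ => ∫ r in (0:ℝ)..z, u r :=
    intervalIntegral.continuous_primitive (fun a b => hu.intervalIntegrable a b) 0
  set c : ℝ → ℂ := fun z => Complex.exp ((Complex.I / ℏ) * ∫ r in (0:ℝ)..z, u r)
  set U : ℝ → unitary (𝓗 →L[ℂ] 𝓗) :=
    fun z => selfAdjoint.expUnitary ⟨(z / ℏ) • H, (IsSelfAdjoint.all _).smul hH⟩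
  have hU (z : ℝ) : (U z : 𝓗 →L[ℂ] 𝓗) = NormedSpace.exp (((Complex.I / ℏ) * z) • H) := by
    simp only [U, selfAdjoint.expUnitary_coe, ← Complex.coe_smul, smul_smul]
    congr 2
    push_cast
    ring
  have hcρ (z : ℝ) : ENNReal.ofReal (Real.exp (2 / ℏ * (∫ r in (0:ℝ)..z, u r).im)) *
      ‖c z‖ₑ ^ (2 : ℝ≥0∞).toReal = 1 := by
    rw [ENNReal.toReal_ofNat, ENNReal.rpow_two, ← ofReal_norm, ← ENNReal.ofReal_pow (norm_nonneg _),
      ← ENNReal.ofReal_mul (Real.exp_pos _).le, Complex.norm_exp_I_div_mul_sq, ← Real.exp_add,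
      add_neg_cancel, Real.exp_zero, ENNReal.ofReal_one]
  obtain ⟨W, hW⟩ := exists_linearIsometryEquiv_withDensity_smul_unitary ENNReal.ofNat_ne_top
    (ENNReal.continuous_ofReal.comp (by fun_prop)).aemeasurable
    (by fun_prop : Continuous c).aestronglyMeasurable
    (by fun_prop : Continuous fun z => (U z : 𝓗 →L[ℂ] 𝓗)).aestronglyMeasurable hcρ
  exact ⟨W, fun η => (hW η).mono fun z hz => by simp only [hz, hU, c]⟩

/-- The **dressing map** `(Wη)(z) = e^{(i/ℏ)∫_0^z u(r)dr} e^{(i/ℏ)zH} η(z)` is a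
surjective linear isometry from `L²(ℝ; 𝓗)` (Lebesgue measure) onto the weighted
space `L²(ℝ, ρ(z)dz; 𝓗)`, where `ρ(z) = exp((2/ℏ)∫_0^z Im u(r) dr)`. -/
theorem dressing_map_isometry {𝓗 : Type*} [NormedAddCommGroup 𝓗]
    [InnerProductSpace ℂ 𝓗] [CompleteSpace 𝓗]
    (H : 𝓗 →L[ℂ] 𝓗) (hH : IsSelfAdjoint H)
    (ℏ : ℝ) (hℏ : 0 < ℏ)
    (u : ℝ → ℂ) (hu : Continuous u)
    (ρ : ℝ → ℝ) (hρ : ∀ z, ρ z = Real.exp ((2 / ℏ) * ∫ r in (0:ℝ)..z, (u r).im))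
    (μ : Measure ℝ)
    (hμ : μ = volume.withDensity fun z => ENNReal.ofReal (ρ z)) :
    ∃ W : Lp 𝓗 2 (volume : Measure ℝ) ≃ₗᵢ[ℂ] Lp 𝓗 2 μ,
      ∀ η : Lp 𝓗 2 (volume : Measure ℝ), ∀ᵐ z : ℝ,
        (W η : ℝ → 𝓗) z
          = Complex.exp ((Complex.I / (ℏ : ℂ)) * ∫ r in (0:ℝ)..z, u r) •
            (NormedSpace.exp (((Complex.I / (ℏ : ℂ)) * (z : ℂ)) • H))
              ((η : ℝ → 𝓗) z) :=
  dressing_map_isometry_general H hH ℏ u hu ρ hρ μ hμ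
end

section
/- Let 𝓗 be a complex Hilbert space, H a bounded self-adjoint operator on 𝓗, S a unitary operator on 𝓗, ℏ > 0, and fix s > 0. Define the operator-valued function V(t) := exp((i/ℏ)(s−t)H) ∘ S^{n(t)} ∘ exp(−(i/ℏ)sH), where n(t) = 1 if t > s and n(t) = 0 otherwise. Then: (i) V(t) is unitary for every t ∈ ℝ and V(0) = I; (ii) t ↦ V(t) is differentiable (in operator norm) at every t ≠ s and satisfies the Schrödinger equation iℏ (d/dt)V(t) = H V(t) there; (iii) V is continuous from the left at t = s, and the right limit satisfies lim_{t↘s} V(t) = S V(s), i.e. the evolution has the single unitary jump S at the instant t = s. -/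
open scoped Topology

/-!
Write `U(t) = e^{-(i/ℏ)tH}`. Then `V(t) = U(t - s) S^{n(t)} U(s)`, so `V(t) = U(t)` for `t ≤ s`
and `V(t) = U(t - s) S U(s)` for `t > s`. Both branches are products of unitaries, are smooth in
`t` and solve `iℏ V' = HV`, because `U` does. At `t = s` the left branch takes the value `U(s)`
and the right branch the value `S U(s)`.
-/

open NormedSpace Complex Filter

section Evolution

variable {A : Type*} [NormedRing A] [NormedAlgebra ℂ A]

noncomputable def freeEvolution (ℏ : ℝ) (H : A) (t : ℝ) : A :=
  exp ((-(I * t) / ℏ) • H)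

noncomputable def singleJumpEvolution (ℏ : ℝ) (H S : A) (s t : ℝ) : A :=
  freeEvolution ℏ H (t - s) * (if s < t then S else 1) * freeEvolution ℏ H s

theorem freeEvolution_zero (ℏ : ℝ) (H : A) : freeEvolution ℏ H 0 = 1 := by
  simp [freeEvolution]

theorem freeEvolution_eq_exp_smul (ℏ : ℝ) (H : A) :
    freeEvolution ℏ H = fun t : ℝ => exp ((t : ℂ) • (-(I / ℏ)) • H) := by
  funext t
  rw [freeEvolution, smul_smul]
  congr 2
  ring

theorem singleJumpEvolution_of_lt (ℏ : ℝ) (H S : A) {s t : ℝ} (h : s < t) :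
    singleJumpEvolution ℏ H S s t = freeEvolution ℏ H (t - s) * S * freeEvolution ℏ H s := by
  rw [singleJumpEvolution, if_pos h]

variable [CompleteSpace A]

theorem freeEvolution_add (ℏ : ℝ) (H : A) (t u : ℝ) :
    freeEvolution ℏ H (t + u) = freeEvolution ℏ H t * freeEvolution ℏ H u := by
  let +nondep : NormedAlgebra ℚ A := .restrictScalars ℚ ℂ A
  rw [freeEvolution, freeEvolution, freeEvolution,
    ← exp_add_of_commute (((Commute.refl H).smul_left _).smul_right _), ← add_smul]
  push_cast
  ring_nf

theorem continuous_freeEvolution (ℏ : ℝ) (H : A) : Continuous (freeEvolution ℏ H) := by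
  let +nondep : NormedAlgebra ℚ A := .restrictScalars ℚ ℂ A
  unfold freeEvolution
  fun_prop

theorem hasDerivAt_freeEvolution (ℏ : ℝ) (H : A) (t : ℝ) :
    HasDerivAt (freeEvolution ℏ H) ((-(I / ℏ)) • (H * freeEvolution ℏ H t)) t := by
  have h := (hasDerivAt_exp_smul_const' ((-(I / ℏ)) • H) (t : ℂ)).scomp t ofRealCLM.hasDerivAt
  rw [freeEvolution_eq_exp_smul]
  simpa only [ofRealCLM_apply, ofReal_one, one_smul, smul_mul_assoc, Function.comp_def] using h

theorem freeEvolution_mem_unitary [StarRing A] [ContinuousStar A] [StarModule ℂ A]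
    (ℏ : ℝ) {H : A} (hH : IsSelfAdjoint H) (t : ℝ) : freeEvolution ℏ H t ∈ unitary A := by
  let +nondep : NormedAlgebra ℚ A := .restrictScalars ℚ ℂ A
  refine exp_mem_unitary_of_mem_skewAdjoint (hH.smul_mem_skewAdjoint ?_)
  simp [skewAdjoint.mem_iff, neg_div]

theorem singleJumpEvolution_of_le (ℏ : ℝ) (H S : A) {s t : ℝ} (h : t ≤ s) :
    singleJumpEvolution ℏ H S s t = freeEvolution ℏ H t := by
  rw [singleJumpEvolution, if_neg h.not_gt, mul_one, ← freeEvolution_add, sub_add_cancel]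

theorem singleJumpEvolution_mem_unitary [StarRing A] [ContinuousStar A] [StarModule ℂ A]
    (ℏ : ℝ) {H S : A} (hH : IsSelfAdjoint H) (hS : S ∈ unitary A) (s t : ℝ) :
    singleJumpEvolution ℏ H S s t ∈ unitary A := by
  have hjump : (if s < t then S else 1) ∈ unitary A := by
    split_ifs
    exacts [hS, one_mem _]
  exact mul_mem (mul_mem (freeEvolution_mem_unitary ℏ hH _) hjump)
    (freeEvolution_mem_unitary ℏ hH s)

theorem hasDerivAt_singleJumpEvolution (ℏ : ℝ) (H S : A) {s t : ℝ} (ht : t ≠ s) :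
    HasDerivAt (singleJumpEvolution ℏ H S s)
      ((-(I / ℏ)) • (H * singleJumpEvolution ℏ H S s t)) t := by
  rcases ht.lt_or_gt with hlt | hgt
  · rw [singleJumpEvolution_of_le ℏ H S hlt.le]
    refine (hasDerivAt_freeEvolution ℏ H t).congr_of_eventuallyEq ?_
    filter_upwards [eventually_le_nhds hlt] with u hu
    exact singleJumpEvolution_of_le ℏ H S hu
  · have hbranch := (((hasDerivAt_freeEvolution ℏ H (t - s)).comp_sub_const t s).mul_const S
      ).mul_const (freeEvolution ℏ H s)
    rw [singleJumpEvolution_of_lt ℏ H S hgt]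
    simp only [smul_mul_assoc, mul_assoc] at hbranch ⊢
    refine hbranch.congr_of_eventuallyEq ?_
    filter_upwards [eventually_gt_nhds hgt] with u hu
    rw [singleJumpEvolution_of_lt ℏ H S hu, mul_assoc]

theorem tendsto_singleJumpEvolution_nhdsLT (ℏ : ℝ) (H S : A) (s : ℝ) :
    Tendsto (singleJumpEvolution ℏ H S s) (𝓝[<] s) (𝓝 (singleJumpEvolution ℏ H S s s)) := by
  rw [singleJumpEvolution_of_le ℏ H S le_rfl]
  refine ((continuous_freeEvolution ℏ H).tendsto s).mono_left nhdsWithin_le_nhds |>.congr' ?_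
  filter_upwards [self_mem_nhdsWithin] with u (hu : u < s)
  exact (singleJumpEvolution_of_le ℏ H S hu.le).symm

theorem tendsto_singleJumpEvolution_nhdsGT (ℏ : ℝ) (H S : A) (s : ℝ) :
    Tendsto (singleJumpEvolution ℏ H S s) (𝓝[>] s) (𝓝 (S * singleJumpEvolution ℏ H S s s)) := by
  have hbranch : Continuous fun t => freeEvolution ℏ H (t - s) * S * freeEvolution ℏ H s := by
    have := continuous_freeEvolution ℏ H
    fun_prop
  have hlimit : freeEvolution ℏ H (s - s) * S * freeEvolution ℏ H s
      = S * singleJumpEvolution ℏ H S s s := by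
    rw [sub_self, freeEvolution_zero, one_mul, singleJumpEvolution_of_le ℏ H S le_rfl]
  rw [← hlimit]
  refine (hbranch.tendsto s).mono_left nhdsWithin_le_nhds |>.congr' ?_
  filter_upwards [self_mem_nhdsWithin] with u (hu : s < u)
  exact (singleJumpEvolution_of_lt ℏ H S hu).symm

end Evolution

/-- The **single-jump stochastic unitary evolution**
`V(t) = e^{(i/ℏ)(s−t)H} S^{n(t)} e^{−(i/ℏ)sH}` (with `n(t) = 1` for `t > s`, `0`
otherwise): (i) each `V(t)` is unitary and `V(0) = I`; (ii) away from `t = s` it is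
differentiable in operator norm and satisfies `iℏ V'(t) = H V(t)`; (iii) it is
continuous from the left at `t = s`, while the right limit is `S V(s)` — the single
unitary jump `S` at the instant `t = s`. -/
theorem single_jump_evolution {𝓗 : Type*} [NormedAddCommGroup 𝓗]
    [InnerProductSpace ℂ 𝓗] [CompleteSpace 𝓗]
    (H : 𝓗 →L[ℂ] 𝓗) (hH : IsSelfAdjoint H)
    (S : 𝓗 →L[ℂ] 𝓗) (hS : S ∈ unitary (𝓗 →L[ℂ] 𝓗))
    (ℏ : ℝ) (hℏ : 0 < ℏ)
    (s : ℝ) (hs : 0 < s)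
    (V : ℝ → (𝓗 →L[ℂ] 𝓗))
    (hV : ∀ t : ℝ, V t
      = (NormedSpace.exp (((Complex.I * ((s : ℂ) - (t : ℂ))) / (ℏ : ℂ)) • H)).comp
          ((if s < t then S else (1 : 𝓗 →L[ℂ] 𝓗)).comp
            (NormedSpace.exp ((-(Complex.I * (s : ℂ)) / (ℏ : ℂ)) • H)))) :
    (∀ t : ℝ, V t ∈ unitary (𝓗 →L[ℂ] 𝓗)) ∧ V 0 = 1
    ∧ (∀ t : ℝ, t ≠ s → ∃ D : 𝓗 →L[ℂ] 𝓗,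
        HasDerivAt V D t ∧ (Complex.I * (ℏ : ℂ)) • D = H.comp (V t))
    ∧ Filter.Tendsto V (𝓝[<] s) (𝓝 (V s))
    ∧ Filter.Tendsto V (𝓝[>] s) (𝓝 (S.comp (V s))) := by
  have hV_eq : V = singleJumpEvolution ℏ H S s := by
    funext t
    rw [hV, singleJumpEvolution, mul_assoc, freeEvolution, freeEvolution]
    congr 3
    push_cast
    ring
  subst hV_eq
  have hℏ_ne : (ℏ : ℂ) ≠ 0 := ofReal_ne_zero.mpr hℏ.ne'
  have hschrodinger (X : 𝓗 →L[ℂ] 𝓗) : (I * ℏ) • (-(I / ℏ)) • X = X := by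
    rw [smul_smul, show I * ℏ * -(I / ℏ) = 1 by field_simp; simp [I_sq], one_smul]
  refine ⟨singleJumpEvolution_mem_unitary ℏ hH hS s, ?_,
    fun t ht => ⟨_, hasDerivAt_singleJumpEvolution ℏ H S ht, hschrodinger _⟩,
    tendsto_singleJumpEvolution_nhdsLT ℏ H S s, tendsto_singleJumpEvolution_nhdsGT ℏ H S s⟩
  rw [singleJumpEvolution_of_le ℏ H S hs.le, freeEvolution_zero]
end

section
/- Let 𝓗 be a complex Hilbert space, H a bounded self-adjoint operator on 𝓗, S a unitary operator on 𝓗, ℏ > 0, u : ℝ → ℂ continuous, and χ⁰ : ℝ → 𝓗 continuously differentiable. For t > 0 define χᵗ(z) := exp((i/ℏ)∫_0^z u(r)dr) · exp((i/ℏ)zH) · S^{Δ(t, z+t)} · exp(−(i/ℏ)(z+t)H) · exp(−(i/ℏ)∫_0^{z+t} u(r)dr) · χ⁰(z+t), with Δ(t,s) := 1_t(s) − 1_0(s). Then: (i) for every t > 0 and every z ∉ {0, −t}, the partial derivatives ∂_t χᵗ(z) and ∂_z χᵗ(z) exist and satisfy the Schrödinger equation iℏ ∂_t χᵗ(z) =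 u(z) χᵗ(z) + iℏ ∂_z χᵗ(z) + H χᵗ(z); (ii) for every t > 0 the left limit at the boundary satisfies lim_{z↗0} χᵗ(z) = S χᵗ(0). -/
/-!
Conjugating by the phase `e^{(i/ℏ)∫_0^z u}` and by `e^{(i/ℏ)zH}` removes `u` and `H` from the
equation and leaves the transport equation `∂_t = ∂_z`, which is solved by shifting the initial
datum written in this interaction picture. The jump `S^{Δ(t,z+t)}` is locally constant away from
`z = 0` and `z = -t`, so it does not affect the derivatives there; it equals `S` for `-t < z < 0`
and the identity at `z = 0`, so continuity of the shifted wave gives the boundary condition.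
-/

open scoped Topology

section ClmApply

variable {𝕜 𝕜' : Type*} [NontriviallyNormedField 𝕜] [NontriviallyNormedField 𝕜']
  [NormedAlgebra 𝕜 𝕜'] {E F : Type*} [NormedAddCommGroup E] [NormedSpace 𝕜' E]
  [NormedSpace 𝕜 E] [IsScalarTower 𝕜 𝕜' E] [NormedAddCommGroup F] [NormedSpace 𝕜' F]
  [NormedSpace 𝕜 F] [IsScalarTower 𝕜 𝕜' F]

theorem HasDerivAt.restrictScalars_clm_apply {c : 𝕜 → E →L[𝕜'] F} {c' : E →L[𝕜'] F}
    {v : 𝕜 → E} {v' : E} {x : 𝕜} (hc : HasDerivAt c c' x) (hv : HasDerivAt v v' x) :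
    HasDerivAt (fun y => c y (v y)) (c' (v x) + c x v') x := by
  have hc' : HasDerivAt (fun y => (c y).restrictScalars 𝕜) (c'.restrictScalars 𝕜) x :=
    (ContinuousLinearMap.restrictScalarsL 𝕜' E F 𝕜 𝕜).hasFDerivAt.comp_hasDerivAt x hc
  exact hc'.clm_apply hv

end ClmApply

theorem hasDerivAt_exp_ofReal_mul_smul {A : Type*} [NormedRing A] [NormedAlgebra ℂ A]
    [CompleteSpace A] (a : ℂ) (T : A) (z : ℝ) :
    HasDerivAt (fun w : ℝ => NormedSpace.exp ((a * w) • T))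
      ((a • T) * NormedSpace.exp ((a * z) • T)) z := by
  simpa only [← Complex.coe_smul, smul_smul, mul_comm _ a] using
    hasDerivAt_exp_smul_const' (𝕂 := ℝ) (a • T) z

theorem hasDerivAt_cexp_mul_integral {u : ℝ → ℂ} (hu : Continuous u) (a : ℂ) (z : ℝ) :
    HasDerivAt (fun w => Complex.exp (a * ∫ r in (0:ℝ)..w, u r))
      (Complex.exp (a * ∫ r in (0:ℝ)..z, u r) * (a * u z)) z :=
  (((hu.integral_hasStrictDerivAt 0 z).hasDerivAt).const_mul a).cexp

noncomputable def jump (t s : ℝ) : ℤ := (if s < t then 1 else 0) - (if s < 0 then 1 else 0)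

theorem eventually_lt_zero_iff {x : ℝ} (hx : x ≠ 0) : ∀ᶠ y in 𝓝 x, (y < 0 ↔ x < 0) := by
  rcases hx.lt_or_gt with h | h
  · filter_upwards [Iio_mem_nhds h] with y hy using iff_of_true hy h
  · filter_upwards [Ioi_mem_nhds h] with y hy using iff_of_false hy.not_gt h.not_gt

theorem jump_add_right (t z : ℝ) :
    jump t (z + t) = (if z < 0 then 1 else 0) - (if z + t < 0 then 1 else 0) := by
  simp only [jump, add_lt_iff_neg_right]

theorem eventually_jump_add_right_eq {t z : ℝ} (hz : z ≠ 0) (hzt : z + t ≠ 0) :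
    ∀ᶠ p : ℝ × ℝ in 𝓝 (t, z), jump p.1 (p.2 + p.1) = jump t (z + t) := by
  have hsnd := (continuous_snd.tendsto (t, z)).eventually (eventually_lt_zero_iff hz)
  have hsum := ((continuous_snd.add continuous_fst).tendsto (t, z)).eventually
    (eventually_lt_zero_iff hzt)
  filter_upwards [hsnd, hsum] with p h₁ (h₂ : p.2 + p.1 < 0 ↔ z + t < 0)
  simp only [jump_add_right, h₁, h₂]

theorem jump_add_right_of_mem_Ioo {t z : ℝ} (hz : z ∈ Set.Ioo (-t) 0) : jump t (z + t) = 1 := by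
  rw [jump_add_right, if_pos hz.2, if_neg (by linarith [hz.1]), sub_zero]

theorem jump_self {t : ℝ} (ht : 0 < t) : jump t t = 0 := by
  simp [jump, ht.not_gt]

section Wave

open NormedSpace

variable {E : Type*} [NormedAddCommGroup E] [NormedSpace ℂ E]
  (a : ℂ) (u : ℝ → ℂ) (H : E →L[ℂ] E)

noncomputable def interactionPicture (χ0 : ℝ → E) (s : ℝ) : E :=
  exp ((-(a * s)) • H) (Complex.exp (-(a * ∫ r in (0:ℝ)..s, u r)) • χ0 s)

noncomputable def transportedWave (K : E →L[ℂ] E) (g : ℝ → E) (t z : ℝ) : E :=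
  Complex.exp (a * ∫ r in (0:ℝ)..z, u r) • exp ((a * z) • H) (K (g (z + t)))

variable {a u H}

theorem transportedWave_zero (K : E →L[ℂ] E) (g : ℝ → E) (t : ℝ) :
    transportedWave a u H K g t 0 = K (g t) := by
  simp [transportedWave]

theorem transportedWave_hasDerivAt_time (K : E →L[ℂ] E) {g : ℝ → E} {g' : E} {t z : ℝ}
    (hg : HasDerivAt g g' (z + t)) :
    HasDerivAt (fun τ => transportedWave a u H K g τ z)
      (Complex.exp (a * ∫ r in (0:ℝ)..z, u r) • exp ((a * z) • H) (K g')) t :=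
  ((((exp ((a * z) • H)).comp K).restrictScalars ℝ).hasFDerivAt.comp_hasDerivAt t
    (hg.comp_const_add z t)).const_smul _

variable [CompleteSpace E]

theorem hasDerivAt_exp_ofReal_mul_smul_apply {v : ℝ → E} {v' : E} {z : ℝ}
    (hv : HasDerivAt v v' z) :
    HasDerivAt (fun w : ℝ => exp ((a * w) • H) (v w))
      (a • H (exp ((a * z) • H) (v z)) + exp ((a * z) • H) v') z := by
  simpa using (hasDerivAt_exp_ofReal_mul_smul a H z).restrictScalars_clm_apply hv

theorem differentiable_interactionPicture (hu : Continuous u) {χ0 : ℝ → E}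
    (hχ0 : Differentiable ℝ χ0) : Differentiable ℝ (interactionPicture a u H χ0) := fun s => by
  have hpulled := (hasDerivAt_cexp_mul_integral hu (-a) s).smul (hχ0 s).hasDerivAt
  simp only [neg_mul] at hpulled
  have hexp := hasDerivAt_exp_ofReal_mul_smul_apply (a := -a) (H := H) hpulled
  simp only [neg_mul] at hexp
  exact hexp.differentiableAt

theorem transportedWave_hasDerivAt_space (hu : Continuous u) (K : E →L[ℂ] E) {g : ℝ → E}
    {g' : E} {t z : ℝ} (hg : HasDerivAt g g' (z + t)) :
    HasDerivAt (fun w => transportedWave a u H K g t w)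
      (a • (u z • transportedWave a u H K g t z + H (transportedWave a u H K g t z))
        + Complex.exp (a * ∫ r in (0:ℝ)..z, u r) • exp ((a * z) • H) (K g')) z := by
  have hshift : HasDerivAt (fun w => K (g (w + t))) (K g') z :=
    (K.restrictScalars ℝ).hasFDerivAt.comp_hasDerivAt z (hg.comp_add_const z t)
  refine ((hasDerivAt_cexp_mul_integral hu a z).smul
    (hasDerivAt_exp_ofReal_mul_smul_apply hshift)).congr_deriv ?_
  simp only [transportedWave, map_smul, smul_add, smul_smul]
  module

theorem continuous_transportedWave (hu : Continuous u) (K : E →L[ℂ] E) {g : ℝ → E}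
    (hg : Differentiable ℝ g) (t : ℝ) : Continuous (transportedWave a u H K g t) :=
  continuous_iff_continuousAt.2 fun z =>
    (transportedWave_hasDerivAt_space hu K (hg (z + t)).hasDerivAt).continuousAt

theorem transportedWave_schrodinger {ℏ : ℝ} (hℏ : ℏ ≠ 0) (hu : Continuous u) (K : E →L[ℂ] E)
    {g : ℝ → E} (hg : Differentiable ℝ g) (t z : ℝ) :
    ∃ Dt Dz : E, HasDerivAt (fun τ => transportedWave (Complex.I / ℏ) u H K g τ z) Dt t
      ∧ HasDerivAt (fun w => transportedWave (Complex.I / ℏ) u H K g t w) Dz z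
      ∧ (Complex.I * ℏ) • Dt = u z • transportedWave (Complex.I / ℏ) u H K g t z
          + (Complex.I * ℏ) • Dz + H (transportedWave (Complex.I / ℏ) u H K g t z) := by
  have hg' := (hg (z + t)).hasDerivAt
  refine ⟨_, _, transportedWave_hasDerivAt_time K hg',
    transportedWave_hasDerivAt_space hu K hg', ?_⟩
  have hiℏ : Complex.I * ℏ * (Complex.I / ℏ) = -1 := by
    have : (ℏ : ℂ) ≠ 0 := by exact_mod_cast hℏ
    field_simp
    exact Complex.I_sq
  rw [smul_add (Complex.I * ℏ), smul_smul (Complex.I * ℏ) (Complex.I / ℏ), hiℏ]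
  module

end Wave

theorem toy_model_solution_pde_and_boundary_general {𝓗 : Type*} [NormedAddCommGroup 𝓗]
    [InnerProductSpace ℂ 𝓗] [CompleteSpace 𝓗]
    (H : 𝓗 →L[ℂ] 𝓗)
    (S : unitary (𝓗 →L[ℂ] 𝓗))
    (ℏ : ℝ) (hℏ : 0 < ℏ)
    (u : ℝ → ℂ) (hu : Continuous u)
    (χ0 : ℝ → 𝓗) (hχ0 : ContDiff ℝ 1 χ0)
    (Δ : ℝ → ℝ → ℤ)
    (hΔ : ∀ t s, Δ t s = (if s < t then 1 else 0) - (if s < 0 then 1 else 0))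
    (χ : ℝ → ℝ → 𝓗)
    (hχ : ∀ t z : ℝ, χ t z
      = Complex.exp ((Complex.I / (ℏ : ℂ)) * ∫ r in (0:ℝ)..z, u r) •
          (NormedSpace.exp (((Complex.I / (ℏ : ℂ)) * (z : ℂ)) • H))
            ((↑(S ^ (Δ t (z + t))) : 𝓗 →L[ℂ] 𝓗)
              ((NormedSpace.exp ((-((Complex.I / (ℏ : ℂ)) * ((z : ℂ) + (t : ℂ)))) • H))
                (Complex.exp (-((Complex.I / (ℏ : ℂ)) * ∫ r in (0:ℝ)..(z + t), u r)) •
                  χ0 (z + t))))) :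
    (∀ t : ℝ, 0 < t → ∀ z : ℝ, z ≠ 0 → z ≠ -t →
      ∃ Dt Dz : 𝓗, HasDerivAt (fun τ : ℝ => χ τ z) Dt t
        ∧ HasDerivAt (fun w : ℝ => χ t w) Dz z
        ∧ (Complex.I * (ℏ : ℂ)) • Dt
            = u z • χ t z + (Complex.I * (ℏ : ℂ)) • Dz + H (χ t z))
    ∧ ∀ t : ℝ, 0 < t →
        Filter.Tendsto (fun z : ℝ => χ t z) (𝓝[<] (0:ℝ))
          (𝓝 ((↑S : 𝓗 →L[ℂ] 𝓗) (χ t 0))) := by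
  obtain rfl : Δ = jump := funext₂ hΔ
  set g := interactionPicture (Complex.I / ℏ) u H χ0
  have hg : Differentiable ℝ g :=
    differentiable_interactionPicture hu (hχ0.differentiable one_ne_zero)
  have hχ' : ∀ t z,
      χ t z = transportedWave (Complex.I / ℏ) u H (S ^ jump t (z + t) : unitary _) g t z := by
    intro t z
    rw [hχ t z]
    simp only [transportedWave, g, interactionPicture]
    push_cast
    rfl
  refine ⟨fun t _ z hz hzt => ?_, fun t ht => ?_⟩
  · obtain ⟨Dt, Dz, hDt, hDz, hpde⟩ :=
      transportedWave_schrodinger hℏ.ne' hu (S ^ jump t (z + t) : unitary _) hg t z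
    have hJ := eventually_jump_add_right_eq hz (add_eq_zero_iff_eq_neg.not.2 hzt)
    refine ⟨Dt, Dz, hDt.congr_of_eventuallyEq ?_, hDz.congr_of_eventuallyEq ?_, by rwa [hχ']⟩
    · filter_upwards [((Continuous.prodMk_left z).tendsto t).eventually hJ]
        with τ (hτ : jump τ (z + τ) = _)
      rw [hχ', hτ]
    · filter_upwards [((Continuous.prodMk_right t).tendsto z).eventually hJ]
        with w (hw : jump t (w + t) = _)
      rw [hχ', hw]
  · have hχt0 : χ t 0 = g t := by
      simp [hχ', jump_self ht, transportedWave_zero]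
    have hlim : Filter.Tendsto (transportedWave (Complex.I / ℏ) u H S g t) (𝓝[<] 0)
        (𝓝 ((S : 𝓗 →L[ℂ] 𝓗) (χ t 0))) := by
      rw [hχt0, ← transportedWave_zero (a := Complex.I / ℏ) (u := u) (H := H)]
      exact ((continuous_transportedWave hu _ hg t).tendsto 0).mono_left nhdsWithin_le_nhds
    refine hlim.congr' ?_
    filter_upwards [Ioo_mem_nhdsLT (neg_lt_zero.2 ht)] with w hw
    rw [hχ', jump_add_right_of_mem_Ioo hw, zpow_one]

/-- The explicit solution
`χᵗ(z) = e^{(i/ℏ)∫_0^z u} e^{(i/ℏ)zH} S^{Δ(t,z+t)} e^{−(i/ℏ)(z+t)H}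
e^{−(i/ℏ)∫_0^{z+t} u} χ0(z+t)` of the toy Schrödinger boundary value problem:
(i) away from `z = 0` and `z = −t` both partial derivatives exist and
`iℏ ∂_t χᵗ(z) = u(z) χᵗ(z) + iℏ ∂_z χᵗ(z) + H χᵗ(z)`; (ii) at the boundary
`lim_{z↗0} χᵗ(z) = S χᵗ(0)` for every `t > 0`. -/
theorem toy_model_solution_pde_and_boundary {𝓗 : Type*} [NormedAddCommGroup 𝓗]
    [InnerProductSpace ℂ 𝓗] [CompleteSpace 𝓗]
    (H : 𝓗 →L[ℂ] 𝓗) (hH : IsSelfAdjoint H)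
    (S : unitary (𝓗 →L[ℂ] 𝓗))
    (ℏ : ℝ) (hℏ : 0 < ℏ)
    (u : ℝ → ℂ) (hu : Continuous u)
    (χ0 : ℝ → 𝓗) (hχ0 : ContDiff ℝ 1 χ0)
    (Δ : ℝ → ℝ → ℤ)
    (hΔ : ∀ t s, Δ t s = (if s < t then 1 else 0) - (if s < 0 then 1 else 0))
    (χ : ℝ → ℝ → 𝓗)
    (hχ : ∀ t z : ℝ, χ t z
      = Complex.exp ((Complex.I / (ℏ : ℂ)) * ∫ r in (0:ℝ)..z, u r) •
          (NormedSpace.exp (((Complex.I / (ℏ : ℂ)) * (z : ℂ)) • H))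
            ((↑(S ^ (Δ t (z + t))) : 𝓗 →L[ℂ] 𝓗)
              ((NormedSpace.exp ((-((Complex.I / (ℏ : ℂ)) * ((z : ℂ) + (t : ℂ)))) • H))
                (Complex.exp (-((Complex.I / (ℏ : ℂ)) * ∫ r in (0:ℝ)..(z + t), u r)) •
                  χ0 (z + t))))) :
    (∀ t : ℝ, 0 < t → ∀ z : ℝ, z ≠ 0 → z ≠ -t →
      ∃ Dt Dz : 𝓗, HasDerivAt (fun τ : ℝ => χ τ z) Dt t
        ∧ HasDerivAt (fun w : ℝ => χ t w) Dz z
        ∧ (Complex.I * (ℏ : ℂ)) • Dt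
            = u z • χ t z + (Complex.I * (ℏ : ℂ)) • Dz + H (χ t z))
    ∧ ∀ t : ℝ, 0 < t →
        Filter.Tendsto (fun z : ℝ => χ t z) (𝓝[<] (0:ℝ))
          (𝓝 ((↑S : 𝓗 →L[ℂ] 𝓗) (χ t 0))) :=
  toy_model_solution_pde_and_boundary_general H S ℏ hℏ u hu χ0 hχ0 Δ hΔ χ hχ
end

section
/- Let 𝓗 be a complex Hilbert space, ℏ > 0, ρ : ℝ → (0,∞) continuously differentiable, and u : ℝ → ℂ continuous with ℏ ρ'(z) = 2 Im u(z) · ρ(z) for all z. Let χ : ℝ → 𝓗 be compactly supported, continuously differentiable on (−∞,0] and on [0,∞) separately (with one-sided limits χ(0_−), χ(0) at 0), and suppose the boundary condition preserves the norm: ‖χ(0_−)‖ = ‖χ(0)‖ (for instance χ(0_−) = Sχ(0) with S unitary). Then Im ∫_ℝ ⟨χ(z), u(z)χ(z) + iℏ χ'(z)⟩ ρ(z) dz = 0; that is, the operator ĥχ = uχ + iℏ∂_zχ is symmetric on the ρ-weighted space relative to the unitary boundary condition. -/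
open scoped InnerProductSpace

open MeasureTheory Set Filter Topology

/-! Since `ℏ ρ' = 2 (Im u) ρ`, the imaginary part of `⟨χ, uχ + iℏχ'⟩ ρ` is the derivative of
`(ℏ/2) ‖χ‖² ρ` away from `0`. Integrating over the two half-lines, where `χ` vanishes at infinity,
leaves only the jump `(ℏ/2) ρ(0) (‖χ(0_−)‖² − ‖χ(0)‖²)`, which vanishes for a norm-preserving
boundary condition. -/

section ComplexInnerProductSpace

variable {E : Type*} [NormedAddCommGroup E] [InnerProductSpace ℂ E]

theorem HasDerivAt.norm_sq_complex {φ : ℝ → E} {φ' : E} {z : ℝ} (hφ : HasDerivAt φ φ' z) :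
    HasDerivAt (‖φ ·‖ ^ 2) (2 * (⟪φ z, φ'⟫_ℂ).re) z := by
  let _ := InnerProductSpace.rclikeToReal ℂ E
  simpa only [real_inner_eq_re_inner, RCLike.re_to_complex] using hφ.norm_sq

theorem im_inner_smul_add_I_mul_smul_mul_ofReal (x y : E) (u : ℂ) (ℏ r : ℝ) :
    (⟪x, u • x + (Complex.I * ℏ) • y⟫_ℂ * r).im = u.im * ‖x‖ ^ 2 * r + ℏ * (⟪x, y⟫_ℂ).re * r := by
  rw [inner_add_right, inner_smul_right, inner_smul_right, inner_self_eq_norm_sq_to_K]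
  simp [Complex.mul_im, Complex.mul_re, ← Complex.ofReal_pow]
  ring

theorem hasDerivAt_half_mul_norm_sq_mul {φ : ℝ → E} {φ' : E} {ρ : ℝ → ℝ} {ρ' : ℝ} {u : ℂ} {ℏ z : ℝ}
    (hφ : HasDerivAt φ φ' z) (hρ : HasDerivAt ρ ρ' z) (hlog : ℏ * ρ' = 2 * u.im * ρ z) :
    HasDerivAt (fun t => ℏ / 2 * (‖φ t‖ ^ 2 * ρ t))
      (⟪φ z, u • φ z + (Complex.I * ℏ) • φ'⟫_ℂ * ρ z).im z := by
  refine ((hφ.norm_sq_complex.mul hρ).const_mul (ℏ / 2)).congr_deriv ?_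
  rw [im_inner_smul_add_I_mul_smul_mul_ofReal]
  linear_combination (‖φ z‖ ^ 2 / 2) * hlog

end ComplexInnerProductSpace

theorem HasCompactSupport.ite_lt_eventuallyEq_zero {E : Type*} [Zero E] {f g : ℝ → E} {a : ℝ}
    (hfg : HasCompactSupport fun x => if x < a then f x else g x) :
    f =ᶠ[atBot] 0 ∧ g =ᶠ[atTop] 0 := by
  rw [hasCompactSupport_iff_eventuallyEq, coclosedCompact_eq_cocompact] at hfg
  constructor
  · filter_upwards [hfg.filter_mono atBot_le_cocompact, eventually_lt_atBot a] with x hx hxa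
    simpa [hxa] using hx
  · filter_upwards [hfg.filter_mono atTop_le_cocompact, eventually_gt_atTop a] with x hx hxa
    simpa [not_lt.2 hxa.le] using hx

theorem integrable_ite_lt_of_hasCompactSupport {E : Type*} [NormedAddCommGroup E] {f g : ℝ → E}
    {a : ℝ} (hf : Continuous f) (hg : Continuous g)
    (hfg : HasCompactSupport fun x => if x < a then f x else g x) :
    Integrable fun x => if x < a then f x else g x := by
  set F := fun x => if x < a then f x else g x
  have hleft : IntegrableOn F (tsupport F ∩ Iio a) :=
    (hf.continuousOn.integrableOn_compact hfg).mono_set inter_subset_left |>.congr_fun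
      (fun x hx => (if_pos hx.2).symm) (hfg.measurableSet.inter measurableSet_Iio)
  have hright : IntegrableOn F (tsupport F ∩ Ici a) :=
    (hg.continuousOn.integrableOn_compact hfg).mono_set inter_subset_left |>.congr_fun
      (fun x hx => (if_neg (not_lt.2 hx.2)).symm) (hfg.measurableSet.inter measurableSet_Ici)
  rw [← integrableOn_iff_integrable_of_support_subset (subset_tsupport F),
    ← inter_univ (tsupport F), ← Iio_union_Ici, inter_union_distrib_left]
  exact hleft.union hright

theorem integral_ite_lt_of_hasDerivAt {E : Type*} [NormedAddCommGroup E] [NormedSpace ℝ E]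
    [CompleteSpace E] {Gl Gr gl gr : ℝ → E} {a : ℝ} (hGl : ∀ x, HasDerivAt Gl (gl x) x)
    (hGr : ∀ x, HasDerivAt Gr (gr x) x) (hl : Gl =ᶠ[atBot] 0) (hr : Gr =ᶠ[atTop] 0)
    (hint : Integrable fun x => if x < a then gl x else gr x) :
    ∫ x, (if x < a then gl x else gr x) = Gl a - Gr a := by
  have hleft : EqOn (fun x => if x < a then gl x else gr x) gl (Iio a) := fun x hx => if_pos hx
  have hright : EqOn (fun x => if x < a then gl x else gr x) gr (Ioi a) :=
    fun x hx => if_neg (not_lt.2 hx.le)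
  have hIl : IntegrableOn gl (Iic a) :=
    ((hint.integrableOn.congr_fun hleft measurableSet_Iio).congr_set_ae Iio_ae_eq_Iic.symm)
  have hIr : IntegrableOn gr (Ioi a) := hint.integrableOn.congr_fun hright measurableSet_Ioi
  have hGl0 : Tendsto Gl atBot (𝓝 0) := hl.tendsto
  have hGr0 : Tendsto Gr atTop (𝓝 0) := hr.tendsto
  rw [← intervalIntegral.integral_Iic_add_Ioi hint.integrableOn hint.integrableOn,
    setIntegral_congr_set Iio_ae_eq_Iic.symm, setIntegral_congr_fun measurableSet_Iio hleft,
    setIntegral_congr_fun measurableSet_Ioi hright, setIntegral_congr_set Iio_ae_eq_Iic,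
    integral_Iic_of_hasDerivAt_of_tendsto' (fun x _ => hGl x) hIl hGl0,
    integral_Ioi_of_hasDerivAt_of_tendsto' (fun x _ => hGr x) hIr hGr0,
    sub_zero, zero_sub, sub_eq_add_neg]

theorem toy_hamiltonian_symmetric_general {𝓗 : Type*} [NormedAddCommGroup 𝓗]
    [InnerProductSpace ℂ 𝓗]
    (ℏ : ℝ)
    (ρ : ℝ → ℝ) (hρC1 : ContDiff ℝ 1 ρ)
    (u : ℝ → ℂ) (hu : Continuous u)
    (hlog : ∀ z, ℏ * deriv ρ z = 2 * (u z).im * ρ z)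
    (χm χp : ℝ → 𝓗) (hχm : ContDiff ℝ 1 χm) (hχp : ContDiff ℝ 1 χp)
    (χ : ℝ → 𝓗) (hχ : ∀ z, χ z = if z < 0 then χm z else χp z)
    (hsupp : HasCompactSupport χ)
    (hbd : ‖χm 0‖ = ‖χp 0‖) :
    (∫ z : ℝ, (⟪χ z, u z • χ z
        + (Complex.I * (ℏ : ℂ)) • (if z < 0 then deriv χm z else deriv χp z)⟫_ℂ)
      * (ρ z : ℂ)).im = 0 := by
  set q : (ℝ → 𝓗) → ℝ → ℂ :=
    fun φ z => ⟪φ z, u z • φ z + (Complex.I * (ℏ : ℂ)) • deriv φ z⟫_ℂ * (ρ z : ℂ)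
  set G : (ℝ → 𝓗) → ℝ → ℝ := fun φ z => ℏ / 2 * (‖φ z‖ ^ 2 * ρ z)
  have hq : ∀ φ, ContDiff ℝ 1 φ → Continuous (q φ) := fun φ hφ => by
    have := hφ.continuous_deriv le_rfl
    fun_prop
  have hG : ∀ φ, ContDiff ℝ 1 φ → ∀ z, HasDerivAt (G φ) (q φ z).im z := fun φ hφ z =>
    hasDerivAt_half_mul_norm_sq_mul (hφ.differentiable one_ne_zero z).hasDerivAt
      (hρC1.differentiable one_ne_zero z).hasDerivAt (hlog z)
  obtain ⟨hχm0, hχp0⟩ := (funext hχ ▸ hsupp).ite_lt_eventuallyEq_zero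
  have hGm : G χm =ᶠ[atBot] 0 := hχm0.mono fun z hz => by simp [G, hz]
  have hGp : G χp =ᶠ[atTop] 0 := hχp0.mono fun z hz => by simp [G, hz]
  have hsplit : (fun z => ⟪χ z, u z • χ z
        + (Complex.I * (ℏ : ℂ)) • (if z < 0 then deriv χm z else deriv χp z)⟫_ℂ * (ρ z : ℂ))
      = fun z => if z < 0 then q χm z else q χp z := by
    funext z
    rw [hχ]
    split_ifs <;> rfl
  have hint : Integrable fun z => if z < 0 then q χm z else q χp z := by
    refine integrable_ite_lt_of_hasCompactSupport (hq _ hχm) (hq _ hχp) ?_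
    rw [← hsplit]
    refine hsupp.mono fun z hz hχz => hz ?_
    simp [hχz]
  rw [hsplit, ← RCLike.im_to_complex, ← integral_im hint]
  simp only [RCLike.im_to_complex, apply_ite Complex.im]
  rw [integral_ite_lt_of_hasDerivAt (hG _ hχm) (hG _ hχp) hGm hGp]
  · simp [G, hbd]
  · simpa only [RCLike.im_to_complex, apply_ite Complex.im] using hint.im

/-- **Symmetry of `ĥ = u + iℏ∂_z` on the ρ-weighted space under a unitary boundary
condition**: if `ℏ ρ' = 2 (Im u) ρ`, `χ` is compactly supported and piecewise `C¹`
(given by `C¹` functions `χ₋` on `(−∞,0)` and `χ₊` on `[0,∞)`), and the boundary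
norms agree, `‖χ(0_−)‖ = ‖χ(0)‖`, then
`Im ∫ ⟨χ(z), u(z)χ(z) + iℏ χ'(z)⟩ ρ(z) dz = 0`. -/
theorem toy_hamiltonian_symmetric {𝓗 : Type*} [NormedAddCommGroup 𝓗]
    [InnerProductSpace ℂ 𝓗] [CompleteSpace 𝓗]
    (ℏ : ℝ) (hℏ : 0 < ℏ)
    (ρ : ℝ → ℝ) (hρpos : ∀ z, 0 < ρ z) (hρC1 : ContDiff ℝ 1 ρ)
    (u : ℝ → ℂ) (hu : Continuous u)
    (hlog : ∀ z, ℏ * deriv ρ z = 2 * (u z).im * ρ z)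
    (χm χp : ℝ → 𝓗) (hχm : ContDiff ℝ 1 χm) (hχp : ContDiff ℝ 1 χp)
    (χ : ℝ → 𝓗) (hχ : ∀ z, χ z = if z < 0 then χm z else χp z)
    (hsupp : HasCompactSupport χ)
    (hbd : ‖χm 0‖ = ‖χp 0‖) :
    (∫ z : ℝ, (⟪χ z, u z • χ z
        + (Complex.I * (ℏ : ℂ)) • (if z < 0 then deriv χm z else deriv χp z)⟫_ℂ)
      * (ρ z : ℂ)).im = 0 :=
  toy_hamiltonian_symmetric_general ℏ ρ hρC1 u hu hlog χm χp hχm hχp χ hχ hsupp hbd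
end

section
/- Let 𝓗 be a complex Hilbert space, H a bounded self-adjoint operator on 𝓗, S a unitary operator on 𝓗, ℏ > 0, u : ℝ → ℂ continuous, and set ũ(z) := u(−z) and S(z) := exp((i/ℏ)zH) ∘ S ∘ exp(−(i/ℏ)zH). Given functions ψ⁰, ψ̃⁰ : ℝ → 𝓗, define for t ∈ ℝ the input and output waves ψᵗ(z) := exp(−(i/ℏ)∫_0^t u(z+r)dr) · exp(−(i/ℏ)tH) · ψ⁰(z+t) and ψ̃ᵗ(z) := exp(−(i/ℏ)∫_0^t ũ(z−r)dr) · exp(−(i/ℏ)tH) · ψ̃⁰(z−t). If the reflection connection ψ̃⁰(−z) = S(z) ψ⁰(z) holds for all z ∈ ℝ, then it is preserved for all times: ψ̃ᵗ(−z) = S(z) ψᵗ(z) for all z ∈ ℝ and all t ∈ ℝ. -/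
/-!
Both waves are the same free evolution `e^{−(i/ℏ)tH}` up to a scalar phase, and the two phases
agree at mirror points since `ũ(−z − r) = u(z + r)`. The claim then reduces to the intertwining
relation `e^{−(i/ℏ)tH} S(z + t) = S(z) e^{−(i/ℏ)tH}`, which is the one-parameter group law of
`b ↦ e^{b H}`.
-/

open NormedSpace

section

variable {𝕂 𝔸 : Type*} [RCLike 𝕂] [NormedRing 𝔸] [NormedAlgebra 𝕂 𝔸] [CompleteSpace 𝔸]

theorem exp_smul_mul_exp_smul (x : 𝔸) (a b : 𝕂) :
    exp (a • x) * exp (b • x) = exp ((a + b) • x) := by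
  let : NormedAlgebra ℚ 𝔸 := .restrictScalars ℚ 𝕂 𝔸
  rw [add_smul, exp_add_of_commute (((Commute.refl x).smul_left a).smul_right b)]

noncomputable def conjExpSMul (x s : 𝔸) (b : 𝕂) : 𝔸 := exp (b • x) * (s * exp ((-b) • x))

theorem exp_smul_mul_conjExpSMul (x s : 𝔸) (a b : 𝕂) :
    exp (a • x) * conjExpSMul x s b = conjExpSMul x s (a + b) * exp (a • x) := by
  rw [conjExpSMul, conjExpSMul, ← mul_assoc, exp_smul_mul_exp_smul, mul_assoc, mul_assoc,
    exp_smul_mul_exp_smul, neg_add_rev, neg_add_cancel_right]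

end

theorem reflection_connection_preserved_general {𝓗 : Type*} [NormedAddCommGroup 𝓗]
    [InnerProductSpace ℂ 𝓗] [CompleteSpace 𝓗]
    (H : 𝓗 →L[ℂ] 𝓗)
    (S : 𝓗 →L[ℂ] 𝓗)
    (ℏ : ℝ)
    (u : ℝ → ℂ)
    (ut : ℝ → ℂ) (hut : ∀ z, ut z = u (-z))
    (Sz : ℝ → (𝓗 →L[ℂ] 𝓗))
    (hSz : ∀ z : ℝ, Sz z
      = (NormedSpace.exp (((Complex.I / (ℏ : ℂ)) * (z : ℂ)) • H)).comp
          (S.comp (NormedSpace.exp ((-((Complex.I / (ℏ : ℂ)) * (z : ℂ))) • H))))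
    (ψ0 ψt0 : ℝ → 𝓗)
    (ψ ψt : ℝ → ℝ → 𝓗)
    (hψ : ∀ t z : ℝ, ψ t z
      = Complex.exp (-((Complex.I / (ℏ : ℂ)) * ∫ r in (0:ℝ)..t, u (z + r))) •
          (NormedSpace.exp ((-((Complex.I / (ℏ : ℂ)) * (t : ℂ))) • H)) (ψ0 (z + t)))
    (hψt : ∀ t z : ℝ, ψt t z
      = Complex.exp (-((Complex.I / (ℏ : ℂ)) * ∫ r in (0:ℝ)..t, ut (z - r))) •
          (NormedSpace.exp ((-((Complex.I / (ℏ : ℂ)) * (t : ℂ))) • H)) (ψt0 (z - t)))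
    (hconn0 : ∀ z : ℝ, ψt0 (-z) = (Sz z) (ψ0 z)) :
    ∀ t z : ℝ, ψt t (-z) = (Sz z) (ψ t z) := by
  intro t z
  set c : ℂ := Complex.I / (ℏ : ℂ)
  have hphase : (∫ r in (0:ℝ)..t, ut (-z - r)) = ∫ r in (0:ℝ)..t, u (z + r) :=
    intervalIntegral.integral_congr fun r _ ↦ by simp only [hut, neg_sub, sub_neg_eq_add, add_comm]
  have hintertwine : exp ((-(c * t)) • H) * Sz (z + t) = Sz z * exp ((-(c * t)) • H) := by
    have hSz' : ∀ w : ℝ, Sz w = conjExpSMul H S (c * w) := hSz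
    rw [hSz', hSz', exp_smul_mul_conjExpSMul]
    congr 2
    push_cast
    ring
  rw [hψt, hψ, show -z - t = -(z + t) by ring, hconn0, hphase, map_smul]
  exact congrArg _ (DFunLike.congr_fun hintertwine (ψ0 (z + t)))

/-- **Preservation of the reflection connection**: for the freely propagating input
and output waves
`ψᵗ(z) = e^{−(i/ℏ)∫_0^t u(z+r)dr} e^{−(i/ℏ)tH} ψ⁰(z+t)`,
`ψ̃ᵗ(z) = e^{−(i/ℏ)∫_0^t ũ(z−r)dr} e^{−(i/ℏ)tH} ψ̃⁰(z−t)` (with `ũ(z) = u(−z)`),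
if the unitary reflection connection `ψ̃⁰(−z) = S(z)ψ⁰(z)` holds at `t = 0`, where
`S(z) = e^{(i/ℏ)zH} S e^{−(i/ℏ)zH}`, then `ψ̃ᵗ(−z) = S(z)ψᵗ(z)` for all `t, z ∈ ℝ`. -/
theorem reflection_connection_preserved {𝓗 : Type*} [NormedAddCommGroup 𝓗]
    [InnerProductSpace ℂ 𝓗] [CompleteSpace 𝓗]
    (H : 𝓗 →L[ℂ] 𝓗) (hH : IsSelfAdjoint H)
    (S : 𝓗 →L[ℂ] 𝓗) (hS : S ∈ unitary (𝓗 →L[ℂ] 𝓗))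
    (ℏ : ℝ) (hℏ : 0 < ℏ)
    (u : ℝ → ℂ) (hu : Continuous u)
    (ut : ℝ → ℂ) (hut : ∀ z, ut z = u (-z))
    (Sz : ℝ → (𝓗 →L[ℂ] 𝓗))
    (hSz : ∀ z : ℝ, Sz z
      = (NormedSpace.exp (((Complex.I / (ℏ : ℂ)) * (z : ℂ)) • H)).comp
          (S.comp (NormedSpace.exp ((-((Complex.I / (ℏ : ℂ)) * (z : ℂ))) • H))))
    (ψ0 ψt0 : ℝ → 𝓗)
    (ψ ψt : ℝ → ℝ → 𝓗)
    (hψ : ∀ t z : ℝ, ψ t z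
      = Complex.exp (-((Complex.I / (ℏ : ℂ)) * ∫ r in (0:ℝ)..t, u (z + r))) •
          (NormedSpace.exp ((-((Complex.I / (ℏ : ℂ)) * (t : ℂ))) • H)) (ψ0 (z + t)))
    (hψt : ∀ t z : ℝ, ψt t z
      = Complex.exp (-((Complex.I / (ℏ : ℂ)) * ∫ r in (0:ℝ)..t, ut (z - r))) •
          (NormedSpace.exp ((-((Complex.I / (ℏ : ℂ)) * (t : ℂ))) • H)) (ψt0 (z - t)))
    (hconn0 : ∀ z : ℝ, ψt0 (-z) = (Sz z) (ψ0 z)) :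
    ∀ t z : ℝ, ψt t (-z) = (Sz z) (ψ t z) :=
  reflection_connection_preserved_general H S ℏ u ut hut Sz hSz ψ0 ψt0 ψ ψt hψ hψt hconn0
end
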